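/- Let φ satisfy Assumption (C¹ ∩ C²((0,∞)), φ'(t) ∼ t·φ''(t)), let a ≥ 0, and let φ_a be the shifted N-function. Then the family {φ_a}_{a≥0} satisfies the Δ₂-condition uniformly in a ≥ 0: there exists c > 0, independent of a, such that φ_a(2t) ≤ c·φ_a(t) for all t ≥ 0. -/

import Mathlib

open MeasureTheory Real Filter

def IsNFunction (φ φ' : ℝ → ℝ) : Prop :=
  ConvexOn ℝ (Set.Ici 0) φ ∧
  φ 0 = 0 ∧ φ' 0 = 0 ∧
  (∀ t : ℝ, 0 ≤ t → φ t = ∫ s in (0:ℝ)..t, φ' s) ∧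
  (∀ t : ℝ, 0 ≤ t → ContinuousWithinAt φ' (Set.Ici t) t) ∧
  MonotoneOn φ' (Set.Ici 0) ∧
  (∀ t : ℝ, 0 < t → 0 < φ' t) ∧
  Tendsto φ' atTop atTop


/-- The Assumption: `φ` is an N-function of class `C¹([0,∞)) ∩ C²((0,∞))`,
with derivative `φ'` and second derivative `φ''`. -/
def SatisfiesAssumption (φ φ' φ'' : ℝ → ℝ) : Prop :=
  IsNFunction φ φ' ∧
  (∀ t : ℝ, 0 ≤ t → HasDerivWithinAt φ (φ' t) (Set.Ici 0) t) ∧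
  ContinuousOn φ' (Set.Ici 0) ∧
  (∀ t : ℝ, 0 < t → HasDerivAt φ' (φ'' t) t) ∧
  ContinuousOn φ'' (Set.Ioi 0)

/-- The shifted N-function `φ_a(t) = ∫₀ᵗ φ'(a+s)·s/(a+s) ds`. -/
noncomputable def shiftedPhi (φ' : ℝ → ℝ) (a t : ℝ) : ℝ :=
  ∫ s in (0:ℝ)..t, φ' (a + s) * s / (a + s)

/-!
The inequality `t φ''(t) ≤ φ'(t) / d` says that `t ↦ φ'(t) t^(-1/d)` is nonincreasing, so
`φ'(2u) ≤ 2^(1/d) φ'(u)`. Since `a + 2s ≤ 2(a + s)` and `2s / (a + 2s) ≤ 2s / (a + s)`, the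
derivative `φ_a'(s) = φ'(a + s) s / (a + s)` inherits `φ_a'(2s) ≤ 2 · 2^(1/d) φ_a'(s)` with a
constant free of `a`, and the substitution `s ↦ 2s` in `φ_a(2t) = ∫₀^{2t} φ_a'` gives
`φ_a(2t) ≤ 4 · 2^(1/d) φ_a(t)`.
-/

open Set

theorem antitoneOn_mul_rpow_neg {f f' : ℝ → ℝ} {p : ℝ}
    (hf : ∀ x, 0 < x → HasDerivAt f (f' x) x) (hp : ∀ x, 0 < x → x * f' x ≤ p * f x) :
    AntitoneOn (fun x => f x * x ^ (-p)) (Ioi 0) := by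
  have hderiv : ∀ x ∈ Ioi (0 : ℝ),
      HasDerivAt (fun x => f x * x ^ (-p)) (f' x * x ^ (-p) + f x * (-p * x ^ (-p - 1))) x :=
    fun x hx => (hf x hx).mul (hasDerivAt_rpow_const (Or.inl hx.ne'))
  refine antitoneOn_of_hasDerivWithinAt_nonpos (convex_Ioi 0)
    (fun x hx => (hderiv x hx).continuousAt.continuousWithinAt)
    (fun x hx => (hderiv x (interior_subset hx)).hasDerivWithinAt) ?_
  intro x hx
  rw [interior_Ioi] at hx
  have hx0 : (0 : ℝ) < x := hx
  have hsplit : f' x * x ^ (-p) + f x * (-p * x ^ (-p - 1))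
      = x ^ (-p) * (x * f' x - p * f x) / x := by
    rw [rpow_sub hx0, rpow_one]
    field_simp
    ring
  rw [hsplit]
  exact div_nonpos_of_nonpos_of_nonneg
    (mul_nonpos_of_nonneg_of_nonpos (rpow_nonneg hx0.le _) (by linarith [hp x hx0])) hx0.le

theorem le_rpow_mul_of_antitoneOn_mul_rpow_neg {f : ℝ → ℝ} {p c u : ℝ}
    (hanti : AntitoneOn (fun x => f x * x ^ (-p)) (Ioi 0)) (hc : 1 ≤ c) (hu : 0 < u) :
    f (c * u) ≤ c ^ p * f u := by
  have hc0 : 0 < c := by linarith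
  have hcu : f (c * u) * (c * u) ^ (-p) ≤ f u * u ^ (-p) :=
    hanti hu (mul_pos hc0 hu) (le_mul_of_one_le_left hu.le hc)
  rw [mul_rpow hc0.le hu.le, rpow_neg hc0.le, ← mul_assoc,
    mul_le_mul_iff_left₀ (rpow_pos_of_pos hu _),
    mul_inv_le_iff₀ (rpow_pos_of_pos hc0 _)] at hcu
  linarith

noncomputable def shiftedPhiDeriv (f : ℝ → ℝ) (a s : ℝ) : ℝ :=
  f (a + s) * s / (a + s)

theorem shiftedPhi_eq_integral_shiftedPhiDeriv (f : ℝ → ℝ) (a t : ℝ) :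
    shiftedPhi f a t = ∫ s in (0 : ℝ)..t, shiftedPhiDeriv f a s :=
  rfl

theorem continuousOn_shiftedPhiDeriv {f : ℝ → ℝ} {a : ℝ} (hf : ContinuousOn f (Ici 0))
    (hf0 : f 0 = 0) (ha : 0 ≤ a) : ContinuousOn (shiftedPhiDeriv f a) (Ici 0) := by
  unfold shiftedPhiDeriv
  rcases ha.eq_or_lt with rfl | ha
  · refine hf.congr fun s hs => ?_
    rcases (mem_Ici.mp hs).eq_or_lt with rfl | hs
    · simp [hf0]
    · rw [zero_add, mul_div_cancel_right₀ _ hs.ne']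
  · have hshift : ContinuousOn (fun s => f (a + s)) (Ici 0) :=
      hf.comp (continuous_const.add continuous_id).continuousOn
        fun s (hs : 0 ≤ s) => show 0 ≤ a + s by linarith
    exact (hshift.mul continuousOn_id).div (continuous_const.add continuous_id).continuousOn
      fun s (hs : 0 ≤ s) => by positivity

theorem shiftedPhiDeriv_two_mul_le {f : ℝ → ℝ} {K a s : ℝ} (hmono : MonotoneOn f (Ici 0))
    (hf0 : 0 ≤ f 0) (hdouble : ∀ u, 0 < u → f (2 * u) ≤ K * f u) (ha : 0 ≤ a)
    (hs : 0 ≤ s) :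
    shiftedPhiDeriv f a (2 * s) ≤ 2 * K * shiftedPhiDeriv f a s := by
  unfold shiftedPhiDeriv
  rcases hs.eq_or_lt with rfl | hs
  · simp
  have has : 0 < a + s := by linarith
  have hf_le : f (a + 2 * s) ≤ K * f (a + s) :=
    (hmono (by positivity : (0 : ℝ) ≤ a + 2 * s) (by positivity : (0 : ℝ) ≤ 2 * (a + s))
      (by linarith)).trans (hdouble _ has)
  have hratio : 2 * s / (a + 2 * s) ≤ 2 * s / (a + s) :=
    div_le_div_of_nonneg_left (by positivity) has (by linarith)
  calc f (a + 2 * s) * (2 * s) / (a + 2 * s)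
      = f (a + 2 * s) * (2 * s / (a + 2 * s)) := by ring
    _ ≤ K * f (a + s) * (2 * s / (a + s)) :=
        mul_le_mul hf_le hratio (by positivity) ((hf0.trans (hmono self_mem_Ici
          (show (0 : ℝ) ≤ a + 2 * s by positivity) (by positivity))).trans hf_le)
    _ = 2 * K * (f (a + s) * s / (a + s)) := by ring

theorem shiftedPhi_two_mul_le {f : ℝ → ℝ} {K a t : ℝ} (hf : ContinuousOn f (Ici 0))
    (hf0 : f 0 = 0) (hmono : MonotoneOn f (Ici 0))
    (hdouble : ∀ u, 0 < u → f (2 * u) ≤ K * f u) (ha : 0 ≤ a) (ht : 0 ≤ t) :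
    shiftedPhi f a (2 * t) ≤ 4 * K * shiftedPhi f a t := by
  have hcont := continuousOn_shiftedPhiDeriv hf hf0 ha
  have hsub : uIcc 0 t ⊆ Ici (0 : ℝ) := by
    rw [uIcc_of_le ht]
    exact Icc_subset_Ici_self
  have hint : IntervalIntegrable (shiftedPhiDeriv f a) volume 0 t :=
    (hcont.mono hsub).intervalIntegrable
  have hint₂ : IntervalIntegrable (fun s => shiftedPhiDeriv f a (2 * s)) volume 0 t :=
    ((hcont.comp (continuous_const.mul continuous_id).continuousOn
      fun s (hs : 0 ≤ s) => show 0 ≤ 2 * s by linarith).mono hsub).intervalIntegrable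
  have hsubst :
      shiftedPhi f a (2 * t) = 2 * ∫ s in (0 : ℝ)..t, shiftedPhiDeriv f a (2 * s) := by
    have h := intervalIntegral.smul_integral_comp_mul_left (shiftedPhiDeriv f a) 2
      (a := 0) (b := t)
    rw [mul_zero, smul_eq_mul] at h
    rw [h, shiftedPhi_eq_integral_shiftedPhiDeriv]
  have hbound : ∫ s in (0 : ℝ)..t, shiftedPhiDeriv f a (2 * s)
      ≤ ∫ s in (0 : ℝ)..t, 2 * K * shiftedPhiDeriv f a s :=
    intervalIntegral.integral_mono_on ht hint₂ (hint.const_mul _) fun s hs =>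
      shiftedPhiDeriv_two_mul_le hmono hf0.ge hdouble ha hs.1
  rw [intervalIntegral.integral_const_mul] at hbound
  rw [hsubst, shiftedPhi_eq_integral_shiftedPhiDeriv]
  linarith

theorem shifted_delta2_uniform_general (φ φ' φ'' : ℝ → ℝ) (hA : SatisfiesAssumption φ φ' φ'')
    (d d' : ℝ) (hd : 0 < d)
    (hequiv : ∀ t : ℝ, 0 < t → d * (t * φ'' t) ≤ φ' t ∧ φ' t ≤ d' * (t * φ'' t)) :
    ∃ c : ℝ, 0 < c ∧
      ∀ a t : ℝ, 0 ≤ a → 0 ≤ t →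
        shiftedPhi φ' a (2 * t) ≤ c * shiftedPhi φ' a t := by
  obtain ⟨⟨-, -, hφ'0, -, -, hmono, -, -⟩, -, hcont, hderiv2, -⟩ := hA
  have hanti : AntitoneOn (fun x => φ' x * x ^ (-(1 / d))) (Ioi 0) :=
    antitoneOn_mul_rpow_neg hderiv2 fun x hx => by
      rw [one_div, inv_mul_eq_div, le_div_iff₀' hd]
      exact (hequiv x hx).1
  have hdouble : ∀ u, 0 < u → φ' (2 * u) ≤ 2 ^ (1 / d) * φ' u := fun u hu =>
    le_rpow_mul_of_antitoneOn_mul_rpow_neg hanti one_le_two hu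
  exact ⟨4 * 2 ^ (1 / d), by positivity, fun a t ha ht =>
    shiftedPhi_two_mul_le hcont hφ'0 hmono hdouble ha ht⟩

/-- Under the Assumption, the shifted N-functions `φ_a` satisfy the Δ₂-condition
uniformly in `a ≥ 0`. -/
theorem shifted_delta2_uniform (φ φ' φ'' : ℝ → ℝ) (hA : SatisfiesAssumption φ φ' φ'')
    (d d' : ℝ) (hd : 0 < d) (hd' : 0 < d')
    (hequiv : ∀ t : ℝ, 0 < t → d * (t * φ'' t) ≤ φ' t ∧ φ' t ≤ d' * (t * φ'' t)) :
    ∃ c : ℝ, 0 < c ∧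
      ∀ a t : ℝ, 0 ≤ a → 0 ≤ t →
        shiftedPhi φ' a (2 * t) ≤ c * shiftedPhi φ' a t :=
  shifted_delta2_uniform_general φ φ' φ'' hA d d' hd hequiv
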